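/- Let N = (L_1, M_1), …, (L_r, M_r) (r ≥ 2) be a special convenient integral Newton-polygon datum satisfying conditions (A1)–(A3). Then Ν := (1 + M_1 + ⋯ + M_r)/(1 + M_1 + ⋯ + M_{r−1}) is а positive integer and Ν = gcd(1 + M_1 + ⋯ + M_r, L_1, …, L_{r−1}); moreover γ_r := (1 + M_1 + ⋯ + M_{r−1})·L_r/M_r is a positive integer. -/
import Mathlib


/-- A canonical Newton-polygon datum with `r` edges: a pair of `1`-indexed sequences
`(L, M)` of positive rationals with strictly increasing inclinations `L k / M k`. -/
def IsCanonicalNP (p : (ℕ → ℚ) × (ℕ → ℚ)) (r : ℕ) : Prop :=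
  (∀ k, 1 ≤ k → k ≤ r → 0 < p.1 k ∧ 0 < p.2 k) ∧
  ∀ k, 1 ≤ k → k < r → p.1 k / p.2 k < p.1 (k + 1) / p.2 (k + 1)

/-- An integral datum: all the entries are positive integers. -/
def IsIntegralNP (p : (ℕ → ℚ) × (ℕ → ℚ)) (r : ℕ) : Prop :=
  ∀ k, 1 ≤ k → k ≤ r →
    (∃ a : ℕ, 0 < a ∧ p.1 k = a) ∧ (∃ b : ℕ, 0 < b ∧ p.2 k = b)

/-- A special datum: all the inclinations are greater than `1`. -/
def IsSpecialNP (p : (ℕ → ℚ) × (ℕ → ℚ)) (r : ℕ) : Prop :=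
  ∀ k, 1 ≤ k → k ≤ r → 1 < p.1 k / p.2 k

/-- A special convenient integral Newton-polygon datum with `r` edges. -/
def IsSCI (p : (ℕ → ℚ) × (ℕ → ℚ)) (r : ℕ) : Prop :=
  IsCanonicalNP p r ∧ IsIntegralNP p r ∧ IsSpecialNP p r

/-- The height `ht(N) = M_1 + ⋯ + M_r` of a Newton-polygon datum with `r` edges. -/
def htNP (p : (ℕ → ℚ) × (ℕ → ℚ)) (r : ℕ) : ℚ := ∑ k ∈ Finset.Icc 1 r, p.2 k

/-- The abrasion `A(N)` of a datum with `r` edges: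
`L̃_i = ((1 + M_1 + ⋯ + M_{r−1})/(1 + M_1 + ⋯ + M_r))·L_i`, the `M_i` are unchanged. -/
def abrNP (p : (ℕ → ℚ) × (ℕ → ℚ)) (r : ℕ) : (ℕ → ℚ) × (ℕ → ℚ) :=
  (fun i => ((1 + ∑ k ∈ Finset.Icc 1 (r - 1), p.2 k) /
      (1 + ∑ k ∈ Finset.Icc 1 r, p.2 k)) * p.1 i,
   p.2)

/-- The iterate `A^i(N)` of the abrasion; `A^i(N)` has `r − i` edges. -/
def abrIterNP (p : (ℕ → ℚ) × (ℕ → ℚ)) (r : ℕ) : ℕ → (ℕ → ℚ) × (ℕ → ℚ)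
  | 0 => p
  | i + 1 => abrNP (abrIterNP p r i) (r - i)

/-- Condition (A1): `1 + ht(N) < L_1/M_1`. -/
def CondA1 (p : (ℕ → ℚ) × (ℕ → ℚ)) (r : ℕ) : Prop :=
  1 + htNP p r < p.1 1 / p.2 1

/-- Condition (A2): for `0 ≤ i ≤ r−1`, `A^i(N)` is a special convenient integral datum
and `L̃^{(i)}_1/M̃^{(i)}_1 ∈ ℕ`; for `0 ≤ i ≤ r−2`,
`(1 + M̃^{(i)}_1 + ⋯ + M̃^{(i)}_{r−i−1})·(L̃^{(i)}_{r−i}/M̃^{(i)}_{r−i}) ∈ ℕ`. -/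
def CondA2 (p : (ℕ → ℚ) × (ℕ → ℚ)) (r : ℕ) : Prop :=
  (∀ i, i ≤ r - 1 → IsSCI (abrIterNP p r i) (r - i) ∧
    ∃ a : ℕ, (abrIterNP p r i).1 1 / (abrIterNP p r i).2 1 = a) ∧
  (∀ i, i + 2 ≤ r → ∃ a : ℕ,
    (1 + ∑ k ∈ Finset.Icc 1 (r - i - 1), (abrIterNP p r i).2 k) *
      ((abrIterNP p r i).1 (r - i) / (abrIterNP p r i).2 (r - i)) = a)

/-- Condition (A3): for `0 ≤ i ≤ r−1`,
`gcd(1 + ht(A^i(N)), L̃^{(i)}_1, …, L̃^{(i)}_{r−i}) = 1` (the gcd of the integer-valued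
rationals being taken via their numerators). -/
def CondA3 (p : (ℕ → ℚ) × (ℕ → ℚ)) (r : ℕ) : Prop :=
  ∀ i, i ≤ r - 1 →
    Nat.gcd (1 + htNP (abrIterNP p r i) (r - i)).num.natAbs
      ((Finset.Icc 1 (r - i)).gcd fun k => ((abrIterNP p r i).1 k).num.natAbs) = 1

/-- For a special convenient integral Newton-polygon datum `N` with
`r ≥ 2` edges satisfying (A1)–(A3), the quotient
`Ν := (1 + M_1 + ⋯ + M_r)/(1 + M_1 + ⋯ + M_{r−1})` is a positive integer equal to
`gcd(1 + M_1 + ⋯ + M_r, L_1, …, L_{r−1})`, and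
`γ_r := (1 + M_1 + ⋯ + M_{r−1})·L_r/M_r` is a positive integer. -/

lemma key_nat (S S' : ℕ) (hS : 0 < S) (hS' : 0 < S') (F : Finset ℕ)
    (L Lt : ℕ → ℕ)
    (hdiv : ∀ k ∈ F, S' * L k = S * Lt k)
    (hgcd : Nat.gcd S' (F.gcd Lt) = 1) :
    ∃ n : ℕ, 0 < n ∧ S = n * S' ∧ n = Nat.gcd S (F.gcd L) := by
  set d := Nat.gcd S S' with hd
  have hdpos : 0 < d := Nat.gcd_pos_of_pos_left _ hS
  obtain ⟨s, hs⟩ : d ∣ S := Nat.gcd_dvd_left _ _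
  obtain ⟨s', hs'⟩ : d ∣ S' := Nat.gcd_dvd_right _ _
  have hspos : 0 < s := by
    rcases Nat.eq_zero_or_pos s with h | h
    · simp [h] at hs; omega
    · exact h
  have hcop : Nat.Coprime s s' := by
    have h1 : s = S / d := by rw [hs, Nat.mul_div_cancel_left _ hdpos]
    have h2 : s' = S' / d := by rw [hs', Nat.mul_div_cancel_left _ hdpos]
    rw [h1, h2]
    exact Nat.coprime_div_gcd_div_gcd hdpos
  have hstep : ∀ k ∈ F, s' * L k = s * Lt k := by
    intro k hk
    have := hdiv k hk
    rw [hs, hs'] at this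
    have : d * (s' * L k) = d * (s * Lt k) := by ring_nf; ring_nf at this; linarith
    exact Nat.eq_of_mul_eq_mul_left hdpos this
  have hsL : ∀ k ∈ F, s ∣ L k := by
    intro k hk
    have h1 : s ∣ s' * L k := ⟨Lt k, (hstep k hk).symm ▸ rfl⟩
    exact hcop.dvd_of_dvd_mul_left h1
  have hs'Lt : ∀ k ∈ F, s' ∣ Lt k := by
    intro k hk
    obtain ⟨m, hm⟩ := hsL k hk
    have h1 := hstep k hk
    rw [hm] at h1
    have : s * (s' * m) = s * Lt k := by ring_nf; ring_nf at h1; linarith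
    exact ⟨m, (Nat.eq_of_mul_eq_mul_left hspos this).symm⟩
  have hs'1 : s' = 1 := by
    have h1 : s' ∣ Nat.gcd S' (F.gcd Lt) :=
      Nat.dvd_gcd ⟨d, by rw [hs', mul_comm]⟩ (Finset.dvd_gcd hs'Lt)
    rw [hgcd] at h1
    exact Nat.dvd_one.mp h1
  have hS'd : S' = d := by rw [hs', hs'1, mul_one]
  have hSeq : S = s * S' := by rw [hS'd, hs, mul_comm]
  have hLk : ∀ k ∈ F, L k = s * Lt k := by
    intro k hk
    have := hstep k hk
    rwa [hs'1, one_mul] at this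
  refine ⟨s, hspos, hSeq, ?_⟩
  set g := Nat.gcd S (F.gcd L) with hg
  have hsg : s ∣ g :=
    Nat.dvd_gcd ⟨S', hSeq⟩ (Finset.dvd_gcd (fun k hk => ⟨Lt k, hLk k hk⟩))
  obtain ⟨u, hu⟩ := hsg
  have hgS : g ∣ S := Nat.gcd_dvd_left _ _
  have huS' : u ∣ S' := by
    have : s * u ∣ s * S' := hu ▸ hSeq ▸ hgS
    exact (mul_dvd_mul_iff_left (by omega : s ≠ 0)).mp this
  have huLt : ∀ k ∈ F, u ∣ Lt k := by
    intro k hk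
    have h1 : g ∣ L k := dvd_trans (Nat.gcd_dvd_right _ _) (Finset.gcd_dvd hk)
    have : s * u ∣ s * Lt k := hu ▸ (hLk k hk) ▸ h1
    exact (mul_dvd_mul_iff_left (by omega : s ≠ 0)).mp this
  have hu1 : u = 1 := by
    have h1 : u ∣ Nat.gcd S' (F.gcd Lt) :=
      Nat.dvd_gcd huS' (Finset.dvd_gcd huLt)
    rw [hgcd] at h1
    exact Nat.dvd_one.mp h1
  simp [hu1] at hu
  omega


theorem abrasion_quotient_integrality
    (p : (ℕ → ℚ) × (ℕ → ℚ)) (r : ℕ) (hr : 2 ≤ r)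
    (hSCI : IsSCI p r) (h1 : CondA1 p r) (h2 : CondA2 p r) (h3 : CondA3 p r) :
    (∃ N : ℕ, 0 < N ∧
      (N : ℚ) = (1 + ∑ k ∈ Finset.Icc 1 r, p.2 k) /
        (1 + ∑ k ∈ Finset.Icc 1 (r - 1), p.2 k) ∧
      N = Nat.gcd (1 + ∑ k ∈ Finset.Icc 1 r, p.2 k).num.natAbs
        ((Finset.Icc 1 (r - 1)).gcd fun k => (p.1 k).num.natAbs)) ∧
    ∃ c : ℕ, 0 < c ∧
      (c : ℚ) = (1 + ∑ k ∈ Finset.Icc 1 (r - 1), p.2 k) * (p.1 r / p.2 r) := by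
  obtain ⟨hcan, hint, hsp⟩ := hSCI
  have hM : ∀ k ∈ Finset.Icc 1 r, p.2 k = (((p.2 k).num.natAbs : ℕ) : ℚ) := by
    intro k hk
    rw [Finset.mem_Icc] at hk
    obtain ⟨b, hb, heq⟩ := (hint k hk.1 hk.2).2
    rw [heq]; norm_num
  set S : ℕ := 1 + ∑ k ∈ Finset.Icc 1 r, (p.2 k).num.natAbs with hSdef
  set S' : ℕ := 1 + ∑ k ∈ Finset.Icc 1 (r-1), (p.2 k).num.natAbs with hS'def
  have hSpos : 0 < S := by omega
  have hS'pos : 0 < S' := by omega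
  have hsub : Finset.Icc 1 (r-1) ⊆ Finset.Icc 1 r := Finset.Icc_subset_Icc_right (by omega)
  have hScast : ((S : ℕ) : ℚ) = 1 + ∑ k ∈ Finset.Icc 1 r, p.2 k := by
    rw [hSdef]; push_cast
    rw [Finset.sum_congr rfl (fun k hk => (hM k hk).symm)]
  have hS'cast : ((S' : ℕ) : ℚ) = 1 + ∑ k ∈ Finset.Icc 1 (r-1), p.2 k := by
    rw [hS'def]; push_cast
    rw [Finset.sum_congr rfl (fun k hk => (hM k (hsub hk)).symm)]
  have hab1 : abrIterNP p r 1 = abrNP p r := rfl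
  obtain ⟨hSCI1, -⟩ := h2.1 1 (by omega)
  rw [hab1] at hSCI1
  obtain ⟨-, hint1, -⟩ := hSCI1
  have hLcast : ∀ k ∈ Finset.Icc 1 r, p.1 k = (((p.1 k).num.natAbs : ℕ) : ℚ) := by
    intro k hk
    rw [Finset.mem_Icc] at hk
    obtain ⟨a, ha, heq⟩ := (hint k hk.1 hk.2).1
    rw [heq]; norm_num
  have hLtcast : ∀ k ∈ Finset.Icc 1 (r-1),
      (abrNP p r).1 k = ((((abrNP p r).1 k).num.natAbs : ℕ) : ℚ) := by
    intro k hk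
    rw [Finset.mem_Icc] at hk
    obtain ⟨a, ha, heq⟩ := (hint1 k hk.1 hk.2).1
    rw [heq]; norm_num
  have hSne : ((S:ℕ):ℚ) ≠ 0 := by positivity
  have hdiv : ∀ k ∈ Finset.Icc 1 (r-1),
      S' * (p.1 k).num.natAbs = S * ((abrNP p r).1 k).num.natAbs := by
    intro k hk
    have hk2 := Finset.mem_Icc.mp hk
    obtain ⟨a, ha, heq⟩ := (hint1 k hk2.1 hk2.2).1
    have hna : ((abrNP p r).1 k).num.natAbs = a := by rw [heq]; norm_num
    have h2 : (abrNP p r).1 k = (((S':ℕ):ℚ)/((S:ℕ):ℚ)) * p.1 k := by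
      show ((1 + ∑ k ∈ Finset.Icc 1 (r-1), p.2 k) /
        (1 + ∑ k ∈ Finset.Icc 1 r, p.2 k)) * p.1 k = _
      rw [← hScast, ← hS'cast]
    have h1 : (((S':ℕ):ℚ)/((S:ℕ):ℚ)) * ((((p.1 k).num.natAbs : ℕ)):ℚ) = ((a:ℕ):ℚ) := by
      rw [← hLcast k (hsub hk), ← h2, heq]
    rw [div_mul_eq_mul_div, div_eq_iff hSne] at h1
    have h3 : (S':ℕ) * (p.1 k).num.natAbs = a * S := by exact_mod_cast h1
    rw [hna, h3, mul_comm]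
  have hg1 := h3 1 (by omega)
  rw [hab1] at hg1
  have hht : (1 + htNP (abrNP p r) (r-1)) = ((S':ℕ) : ℚ) := by
    rw [hS'cast]; rfl
  rw [hht] at hg1
  simp only [Rat.num_natCast, Int.natAbs_natCast] at hg1
  obtain ⟨n, hn, hSeq, hngcd⟩ := key_nat S S' hSpos hS'pos (Finset.Icc 1 (r-1))
    (fun k => (p.1 k).num.natAbs) (fun k => ((abrNP p r).1 k).num.natAbs) hdiv hg1
  constructor
  · refine ⟨n, hn, ?_, ?_⟩
    · rw [← hScast, ← hS'cast, hSeq]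
      have hS'ne : ((S':ℕ):ℚ) ≠ 0 := by positivity
      push_cast
      field_simp
    · rw [← hScast]
      simpa only [Rat.num_natCast, Int.natAbs_natCast] using hngcd
  · obtain ⟨a, ha⟩ := h2.2 0 (by omega)
    simp only [abrIterNP, Nat.sub_zero] at ha
    refine ⟨a, ?_, ha.symm⟩
    have h1 := hcan.1 r (by omega) le_rfl
    have h2 : (0:ℚ) < 1 + ∑ k ∈ Finset.Icc 1 (r-1), p.2 k := by
      rw [← hS'cast]; positivity
    have hpos : (0:ℚ) < (1 + ∑ k ∈ Finset.Icc 1 (r-1), p.2 k) * (p.1 r / p.2 r) :=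
      mul_pos h2 (div_pos h1.1 h1.2)
    rw [ha] at hpos
    exact_mod_cast hpos
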